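/- Let R be an algebraic curvature tensor on ℝⁿ satisfying the first Bianchi identity, and define R²_{ijkl} = Σ_{p,q} R_{ijpq} R_{klpq}. Then for any orthonormal four-frame {e₁,e₂,e₃,e₄}, (R²)₁₃₁₃ + (R²)₁₄₁₄ + (R²)₂₃₂₃ + (R²)₂₄₂₄ + 2(R²)₁₃₄₂ + 2(R²)₁₄₂₃ = Σ_{p,q} (R₁₃pq - R₂₄pq)² + Σ_{p,q} (R₁₄pq + R₂₃pq)² ≥ 0. -/
import Mathlib


/-- The squared curvature term: (R²)_{ijkl} = Σ_{p,q} R_{ijpq} R_{klpq}. -/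
def Rsq (n : ℕ) (R : Fin n → Fin n → Fin n → Fin n → ℝ) (i j k l : Fin n) : ℝ :=
  ∑ p, ∑ q, R i j p q * R k l p q

/-- For an algebraic curvature tensor and four distinct basis indices,
(R²)₁₃₁₃ + (R²)₁₄₁₄ + (R²)₂₃₂₃ + (R²)₂₄₂₄ + 2(R²)₁₃₄₂ + 2(R²)₁₄₂₃
  = Σ_{p,q}(R₁₃pq - R₂₄pq)² + Σ_{p,q}(R₁₄pq + R₂₃pq)² ≥ 0. -/
theorem stmt_5 (n : ℕ) (R : Fin n → Fin n → Fin n → Fin n → ℝ)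
    (hanti1 : ∀ i j k l, R i j k l = - R j i k l)
    (hanti2 : ∀ i j k l, R i j k l = - R i j l k)
    (hpair : ∀ i j k l, R i j k l = R k l i j)
    (hbianchi : ∀ i j k l, R i j k l + R j k i l + R k i j l = 0)
    (i₁ i₂ i₃ i₄ : Fin n)
    (hdist : i₁ ≠ i₂ ∧ i₁ ≠ i₃ ∧ i₁ ≠ i₄ ∧ i₂ ≠ i₃ ∧ i₂ ≠ i₄ ∧ i₃ ≠ i₄) :
    Rsq n R i₁ i₃ i₁ i₃ + Rsq n R i₁ i₄ i₁ i₄ + Rsq n R i₂ i₃ i₂ i₃ + Rsq n R i₂ i₄ i₂ i₄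
        + 2 * Rsq n R i₁ i₃ i₄ i₂ + 2 * Rsq n R i₁ i₄ i₂ i₃
      = (∑ p, ∑ q, (R i₁ i₃ p q - R i₂ i₄ p q) ^ 2)
        + (∑ p, ∑ q, (R i₁ i₄ p q + R i₂ i₃ p q) ^ 2) ∧
    0 ≤ Rsq n R i₁ i₃ i₁ i₃ + Rsq n R i₁ i₄ i₁ i₄ + Rsq n R i₂ i₃ i₂ i₃ + Rsq n R i₂ i₄ i₂ i₄
        + 2 * Rsq n R i₁ i₃ i₄ i₂ + 2 * Rsq n R i₁ i₄ i₂ i₃ := by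
  have key : Rsq n R i₁ i₃ i₁ i₃ + Rsq n R i₁ i₄ i₁ i₄ + Rsq n R i₂ i₃ i₂ i₃ + Rsq n R i₂ i₄ i₂ i₄
        + 2 * Rsq n R i₁ i₃ i₄ i₂ + 2 * Rsq n R i₁ i₄ i₂ i₃
      = (∑ p, ∑ q, (R i₁ i₃ p q - R i₂ i₄ p q) ^ 2)
        + (∑ p, ∑ q, (R i₁ i₄ p q + R i₂ i₃ p q) ^ 2) := by
    unfold Rsq
    simp only [Finset.mul_sum, ← Finset.sum_add_distrib]
    refine Finset.sum_congr rfl fun p _ => Finset.sum_congr rfl fun q _ => ?_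
    rw [hanti1 i₄ i₂ p q]
    ring
  refine ⟨key, ?_⟩
  rw [key]
  positivity
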